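/- Uniqueness of minimum s-t cut under star-stitched weights: let G' = (V, E) be a finite simple graph with weights w : E → ℕ, and fix s ∈ V such that E contains all star edges {(s,v) : v ∈ V, v ≠ s}. Define w_s(e) = 1 if e is incident to s and 0 otherwise, and the stitched weight [w, w_s](e) = (n+1)·w(e) + w_s(e) where n = |V|. Then for every t ∈ V ∖ {s}, there is a unique subset S ⊆ V with s ∈ S, t ∉ S minimizing [w, w_s](cut(S)) over all such subsets. -/

import Mathlib

open Finset
open scoped Classical

/-- The weight of the cut induced by `S`. -/
noncomputable def cutWeight {V : Type*} (E : Finset (Sym2 V)) (w : Sym2 V → ℕ)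
    (S : Finset V) : ℕ :=
  ∑ e ∈ E.filter (fun e => (∃ u ∈ e, u ∈ S) ∧ ∃ u ∈ e, u ∉ S), w e

/-- Indicator weight of edges incident to `s` (the star at `s`). -/
noncomputable def starWeight {V : Type*} (s : V) : Sym2 V → ℕ :=
  fun e => if s ∈ e then 1 else 0

/-!
For `s ∈ S` the star edges contribute exactly `n - |S|` to the cut, so the stitched weight of
`S` is `(n + 1) · w(cut S) + (n - |S|)` with `n - |S| < n + 1`: its residue mod `n + 1`
determines `|S|`, and all minimum cuts have the same size. Cut functions are submodular and the
`s`-`t` cuts are closed under union and intersection, so for two minimum cuts `S` and `T` the cut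
`S ∪ T` is minimum as well; having the same size as `S` and `T`, it equals both.
-/

lemma eq_of_isMinOn_of_submodular {α : Type*} [Lattice α] {s : Set α} {f g : α → ℕ}
    (hsup : SupClosed s) (hinf : InfClosed s)
    (hf : ∀ a ∈ s, ∀ b ∈ s, f (a ⊔ b) + f (a ⊓ b) ≤ f a + f b) (hg : StrictMono g)
    (hfg : ∀ a ∈ s, ∀ b ∈ s, f a = f b → g a = g b) {a b : α} (ha : a ∈ s) (hb : b ∈ s)
    (hamin : IsMinOn f s a) (hbmin : IsMinOn f s b) : a = b := by
  have hab : f a = f b := le_antisymm (isMinOn_iff.mp hamin b hb) (isMinOn_iff.mp hbmin a ha)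
  have hsup_min : f (a ⊔ b) = f a := by
    have := isMinOn_iff.mp hamin _ (hsup ha hb)
    have := isMinOn_iff.mp hamin _ (hinf ha hb)
    have := hf a ha b hb
    omega
  have eq_sup : ∀ c ∈ s, c ≤ a ⊔ b → f c = f (a ⊔ b) → c = a ⊔ b := fun c hc hle hfc =>
    hle.eq_of_not_lt fun hlt => (hg hlt).ne (hfg c hc _ (hsup ha hb) hfc)
  exact (eq_sup a ha le_sup_left hsup_min.symm).trans
    (eq_sup b hb le_sup_right (hab ▸ hsup_min).symm).symm

section Cuts

variable {V : Type*}

lemma cutWeight_eq_sum_ite (E : Finset (Sym2 V)) (w : Sym2 V → ℕ) (S : Finset V) :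
    cutWeight E w S = ∑ e ∈ E, if (∃ u ∈ e, u ∈ S) ∧ ∃ u ∈ e, u ∉ S then w e else 0 :=
  sum_filter _ _

lemma cutWeight_union_add_cutWeight_inter_le (E : Finset (Sym2 V)) (w : Sym2 V → ℕ)
    (S T : Finset V) :
    cutWeight E w (S ∪ T) + cutWeight E w (S ∩ T) ≤ cutWeight E w S + cutWeight E w T := by
  simp only [cutWeight_eq_sum_ite, ← sum_add_distrib]
  refine sum_le_sum fun e _ => ?_
  induction e using Sym2.ind with
  | _ a b =>
    by_cases haS : a ∈ S <;> by_cases hbS : b ∈ S <;> by_cases haT : a ∈ T <;>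
      by_cases hbT : b ∈ T <;> simp [haS, hbS, haT, hbT]

lemma cutWeight_mul_add (E : Finset (Sym2 V)) (c : ℕ) (w w' : Sym2 V → ℕ) (S : Finset V) :
    cutWeight E (fun e => c * w e + w' e) S = c * cutWeight E w S + cutWeight E w' S := by
  simp only [cutWeight, sum_add_distrib, mul_sum]

lemma cutWeight_starWeight [Fintype V] {E : Finset (Sym2 V)} {s : V}
    (hstar : ∀ v : V, v ≠ s → s(s, v) ∈ E) {S : Finset V} (hs : s ∈ S) :
    cutWeight E (starWeight s) S = Fintype.card V - #S := by
  have star_cut_edges : {e ∈ {e ∈ E | (∃ u ∈ e, u ∈ S) ∧ ∃ u ∈ e, u ∉ S} | s ∈ e} =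
      Sᶜ.image (fun v => s(s, v)) := by
    ext e
    simp only [mem_filter, mem_image, mem_compl]
    constructor
    · rintro ⟨⟨-, -, u, hu, huS⟩, hse⟩
      obtain ⟨v, rfl⟩ := Sym2.mem_iff_exists.mp hse
      rcases Sym2.mem_iff.mp hu with rfl | rfl
      · exact absurd hs huS
      · exact ⟨u, huS, rfl⟩
    · rintro ⟨v, hvS, rfl⟩
      exact ⟨⟨hstar v (ne_of_mem_of_not_mem hs hvS).symm, ⟨s, by simp, hs⟩, v, by simp, hvS⟩,
        by simp⟩
  rw [← card_compl, ← card_image_of_injective Sᶜ fun _ _ => Sym2.congr_right.mp,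
    ← star_cut_edges]
  simp only [cutWeight, starWeight, sum_boole, Nat.cast_id]
  convert rfl -- the two filters differ only in their decidability instances

end Cuts

section Stitched

variable {V : Type*} [Fintype V] {E : Finset (Sym2 V)} {s : V}

lemma cutWeight_stitched_mod (hstar : ∀ v : V, v ≠ s → s(s, v) ∈ E) (w : Sym2 V → ℕ)
    {S : Finset V} (hs : s ∈ S) :
    cutWeight E (fun e => (Fintype.card V + 1) * w e + starWeight s e) S
      % (Fintype.card V + 1) = Fintype.card V - #S := by
  rw [cutWeight_mul_add, cutWeight_starWeight hstar hs, mul_comm, Nat.mul_add_mod_of_lt]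
  omega

lemma card_eq_of_cutWeight_stitched_eq (hstar : ∀ v : V, v ≠ s → s(s, v) ∈ E)
    (w : Sym2 V → ℕ) {S T : Finset V} (hS : s ∈ S) (hT : s ∈ T)
    (h : cutWeight E (fun e => (Fintype.card V + 1) * w e + starWeight s e) S =
      cutWeight E (fun e => (Fintype.card V + 1) * w e + starWeight s e) T) :
    #S = #T := by
  have := congrArg (· % (Fintype.card V + 1)) h
  simp only [cutWeight_stitched_mod hstar w hS, cutWeight_stitched_mod hstar w hT] at this
  have := card_le_univ S
  have := card_le_univ T
  omega

end Stitched

/-- Under the star-stitched weights the minimum s-t cut is unique. -/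
theorem unique_min_st_cut_star_stitched {V : Type*} [Fintype V] (E : Finset (Sym2 V))
    (w : Sym2 V → ℕ) (s : V) (hstar : ∀ v : V, v ≠ s → s(s, v) ∈ E) :
    ∀ t : V, t ≠ s →
      ∃! S : Finset V, s ∈ S ∧ t ∉ S ∧
        ∀ T : Finset V, s ∈ T → t ∉ T →
          cutWeight E (fun e => (Fintype.card V + 1) * w e + starWeight s e) S ≤
            cutWeight E (fun e => (Fintype.card V + 1) * w e + starWeight s e) T := by
  intro t ht
  set f := cutWeight E (fun e => (Fintype.card V + 1) * w e + starWeight s e)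
  set cuts : Set (Finset V) := {S | s ∈ S ∧ t ∉ S}
  have hsup : SupClosed cuts := fun S hS T hT =>
    ⟨mem_union_left T hS.1, by simp [mem_union, hS.2, hT.2]⟩
  have hinf : InfClosed cuts := fun S hS T hT =>
    ⟨mem_inter_of_mem hS.1 hT.1, by simp [mem_inter, hS.2]⟩
  obtain ⟨S, hS, hSmin⟩ := cuts.exists_min_image f cuts.toFinite ⟨{s}, by simpa [cuts] using ht⟩
  refine ⟨S, ⟨hS.1, hS.2, fun T hsT htT => hSmin T ⟨hsT, htT⟩⟩, ?_⟩
  rintro T ⟨hsT, htT, hTmin⟩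
  exact eq_of_isMinOn_of_submodular hsup hinf
    (fun A _ B _ => cutWeight_union_add_cutWeight_inter_le E _ A B) card_strictMono
    (fun A hA B hB => card_eq_of_cutWeight_stitched_eq hstar w hA.1 hB.1) ⟨hsT, htT⟩ hS
    (isMinOn_iff.mpr fun B hB => hTmin B hB.1 hB.2) (isMinOn_iff.mpr hSmin)
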